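/- arXiv:1406.2740 — 2 statements merged into one kernel-verified Lean document; each statement's English description precedes it below -/
import Mathlib

section
/- Let W ⊆ F_d \ {e} be a finite subset. Then the quotient map π : ∂F_d → ∂F_d/R_W is a closed map, and consequently the quotient space ∂F_d/R_W, equipped with the quotient topology, is Hausdorff. -/
/-- The alphabet of the free group on `d` generators: a generator together with
a sign (`true` = the generator itself, `false` = its inverse). -/
abbrev Letter (d : ℕ) := Fin d × Bool

/-- The inverse of a letter. -/
def Letter.inv {d : ℕ} (a : Letter d) : Letter d := (a.1, !a.2)

/-- A sequence of letters is reduced if no letter is followed by its inverse. -/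
def IsReducedSeq {d : ℕ} (x : ℕ → Letter d) : Prop :=
  ∀ n, x (n + 1) ≠ Letter.inv (x n)

/-- The boundary `∂F_d` of the free group on `d` generators: the space of
infinite reduced words, topologized as a subspace of the product space
`(Fin d × Bool)^ℕ` (each factor discrete). -/
abbrev Boundary (d : ℕ) := {x : ℕ → Letter d // IsReducedSeq x}

/-- The number of letters cancelled at the junction when the (finite reduced)
word `u` is concatenated with the infinite reduced word `x`. -/
def cancelLen {d : ℕ} (u : List (Letter d)) (x : ℕ → Letter d) : ℕ :=
  Nat.findGreatest (fun k => ∀ i < k, u[u.length - 1 - i]? = some (Letter.inv (x i))) u.length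

/-- The reduction of the concatenation of a finite reduced word `u` with an
infinite reduced word `x`. -/
def concatReduce {d : ℕ} (u : List (Letter d)) (x : ℕ → Letter d) : ℕ → Letter d :=
  fun n =>
    let k := cancelLen u x
    let m := u.length - k
    if h : n < m then u[n]'(by omega) else x (k + (n - m))

open Classical in
/-- The boundary action of the free group on its boundary: left multiplication
followed by free reduction.  (The `if` always takes the `then` branch, since the
reduction of the concatenation of reduced words is again reduced; hence this is
exactly the usual boundary action `g · x`.) -/
noncomputable def boundaryAct {d : ℕ} (g : FreeGroup (Fin d)) (x : Boundary d) : Boundary d :=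
  if h : IsReducedSeq (concatReduce (FreeGroup.toWord g) x.1) then
    ⟨concatReduce (FreeGroup.toWord g) x.1, h⟩
  else x

/-- `x` is the boundary point `w^{+∞}`, the limit of the sequence `(wⁿ)ₙ₌₁^∞`:
for every `k` there is `N` such that for all `n ≥ N` the reduced word of `wⁿ`
has length at least `k` and its first `k` letters agree with those of `x`.
The point `w^{-∞}` is `(w⁻¹)^{+∞}`, i.e. `IsPlusLimit w⁻¹`. -/
def IsPlusLimit {d : ℕ} (w : FreeGroup (Fin d)) (x : Boundary d) : Prop :=
  ∀ k : ℕ, ∃ N : ℕ, ∀ n ≥ N,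
    k ≤ (FreeGroup.toWord (w ^ n)).length ∧
    ∀ i < k, (FreeGroup.toWord (w ^ n))[i]? = some (x.1 i)

/-- The relation `R_W = Δ ∪ {(g·w^{+∞}, g·w^{-∞}) : g ∈ F_d, w ∈ W ∪ W⁻¹}`
on the boundary `∂F_d`. -/
def RW {d : ℕ} (W : Set (FreeGroup (Fin d))) : Set (Boundary d × Boundary d) :=
  {p | p.1 = p.2} ∪
  {p | ∃ (g w : FreeGroup (Fin d)) (xp xm : Boundary d),
      (w ∈ W ∨ w⁻¹ ∈ W) ∧ IsPlusLimit w xp ∧ IsPlusLimit w⁻¹ xm ∧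
      p.1 = boundaryAct g xp ∧ p.2 = boundaryAct g xm}

open Classical in
/-- `p[w]` : the (`ℤ`-valued) indicator function of the cylinder set of the
reduced word of `w` in the boundary. -/
noncomputable def pFun {d : ℕ} (w : FreeGroup (Fin d)) : Boundary d → ℤ :=
  fun x =>
    if ∀ i < (FreeGroup.toWord w).length, (FreeGroup.toWord w)[i]? = some (x.1 i) then 1 else 0

/-- `q[s] = p[s] + p[s⁻¹]` for a generator `s`. -/
noncomputable def qFun {d : ℕ} (s : Fin d) : Boundary d → ℤ :=
  fun x => pFun (FreeGroup.of s) x + pFun (FreeGroup.of s)⁻¹ x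

/-- `q[sⁿ] = p[sⁿ] + p[s⁻ⁿ]` for a generator `s`. -/
noncomputable def qPow {d : ℕ} (s : Fin d) (n : ℕ) : Boundary d → ℤ :=
  fun x => pFun (FreeGroup.of s ^ n) x + pFun ((FreeGroup.of s ^ n)⁻¹) x

/-- The map `w ↦ ŵ` flipping the sign of the exponent of the last syllable of
the reduced word of `w`: if `w = s_{i(1)}^{n(1)} ⋯ s_{i(k)}^{n(k)}` then
`ŵ = s_{i(1)}^{n(1)} ⋯ s_{i(k-1)}^{n(k-1)} s_{i(k)}^{-n(k)}`.  (The final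
syllable is the maximal terminal run of equal letters of the reduced word.) -/
def hatWord {d : ℕ} (w : FreeGroup (Fin d)) : FreeGroup (Fin d) :=
  match (FreeGroup.toWord w).reverse with
  | [] => w
  | a :: _ =>
    let k := ((FreeGroup.toWord w).reverse.takeWhile (fun b => b == a)).length
    FreeGroup.mk ((FreeGroup.toWord w).take ((FreeGroup.toWord w).length - k) ++
      List.replicate k (Letter.inv a))


/-!
In a compact Hausdorff space, an equivalence relation with closed graph has a closed quotient
map (the saturation of a closed set is a projection of a compact set), and a closed quotient
map of a normal space has Hausdorff image. So it suffices that `R_W` is closed.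

As `W` is finite and `w^{±∞}` are unique, `R_W` is the diagonal together with finitely many
orbits `{(g·w^{+∞}, g·w^{-∞})}`, and the closure of each orbit only adds diagonal points:
replacing `g` by a shortest element of `g⟨w⟩` does not change the pair, and for such `g` fewer
than `|w|` letters cancel against either of `w^{±∞}`, because `w^{+∞}` cancels more than half
of the word of `w⁻¹` (the lengths `|wⁿ|` are unbounded). So both points of the pair begin with
all but the last `|w|` letters of `g`: pairs with long `g` are close to the diagonal, and there
are only finitely many `g` of bounded length.
-/

theorem isClosedMap_quotient_mk_of_isClosed {X : Type*} [TopologicalSpace X] [CompactSpace X]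
    [T2Space X] {s : Setoid X} (hs : IsClosed {p : X × X | s p.1 p.2}) :
    IsClosedMap (Quotient.mk s) := by
  intro C hC
  have hsat : Quotient.mk s ⁻¹' (Quotient.mk s '' C)
      = Prod.snd '' ({p | s p.1 p.2} ∩ C ×ˢ Set.univ) := by
    ext y
    simp [Quotient.eq, and_comm]
  refine isQuotientMap_quotient_mk'.isClosed_preimage.1 ?_
  change IsClosed (Quotient.mk s ⁻¹' (Quotient.mk s '' C))
  rw [hsat]
  exact ((hs.inter (hC.prod isClosed_univ)).isCompact.image continuous_snd).isClosed

theorem IsClosedMap.t2Space_of_surjective {X Y : Type*} [TopologicalSpace X] [TopologicalSpace Y]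
    [NormalSpace X] [T1Space X] {f : X → Y} (hf : IsClosedMap f) (hcont : Continuous f)
    (hsurj : Function.Surjective f) : T2Space Y := by
  have : T1Space Y := ⟨fun y => by
    obtain ⟨x, rfl⟩ := hsurj y
    simpa using hf _ (isClosed_singleton (x := x))⟩
  rw [t2Space_iff_disjoint_nhds]
  intro y₁ y₂ hne
  rw [← Filter.disjoint_comap_iff hsurj, ← nhdsSet_singleton, ← nhdsSet_singleton,
    hf.comap_nhdsSet_eq hcont, hf.comap_nhdsSet_eq hcont]
  exact disjoint_nhdsSet_nhdsSet (isClosed_singleton.preimage hcont)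
    (isClosed_singleton.preimage hcont) ((Set.disjoint_singleton.2 hne).preimage f)

open FreeGroup

namespace Letter

variable {d : ℕ}

@[simp] lemma inv_inv (a : Letter d) : a.inv.inv = a := by
  cases a; simp [Letter.inv]

lemma reducedRel_iff_ne_inv (a b : Letter d) : (a.1 = b.1 → a.2 = b.2) ↔ b ≠ a.inv := by
  obtain ⟨a, s⟩ := a
  obtain ⟨b, t⟩ := b
  cases s <;> cases t <;> simp [Letter.inv, eq_comm]

end Letter

namespace Boundary

variable {d : ℕ}

lemma isReduced_iff_getElem {L : List (Letter d)} :
    FreeGroup.IsReduced L ↔ ∀ i (h : i + 1 < L.length), L[i + 1] ≠ L[i].inv := by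
  simp only [FreeGroup.IsReduced, List.isChain_iff_getElem, Letter.reducedRel_iff_ne_inv]

lemma isReduced_reduce (L : List (Letter d)) : FreeGroup.IsReduced (reduce L) :=
  toWord_mk (L₁ := L) ▸ isReduced_toWord

def seqPrefix (x : ℕ → Letter d) (t : ℕ) : List (Letter d) := List.ofFn fun i : Fin t => x i

@[simp] lemma length_seqPrefix (x : ℕ → Letter d) (t : ℕ) : (seqPrefix x t).length = t := by
  simp [seqPrefix]

@[simp] lemma getElem_seqPrefix (x : ℕ → Letter d) (t i : ℕ)
    (h : i < (seqPrefix x t).length) : (seqPrefix x t)[i] = x i := by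
  simp [seqPrefix]

lemma isReduced_seqPrefix {x : ℕ → Letter d} (hx : IsReducedSeq x) (t : ℕ) :
    FreeGroup.IsReduced (seqPrefix x t) :=
  isReduced_iff_getElem.2 fun i _ => by simpa using hx i

lemma cancelLen_le (u : List (Letter d)) (x : ℕ → Letter d) : cancelLen u x ≤ u.length :=
  Nat.findGreatest_le _

lemma getElem_of_lt_cancelLen {u : List (Letter d)} {x : ℕ → Letter d} {i : ℕ}
    (hi : i < cancelLen u x) :
    u[u.length - 1 - i]'(by have := cancelLen_le u x; omega) = (x i).inv := by
  have h := Nat.findGreatest_spec (P := fun k => ∀ i < k, u[u.length - 1 - i]? = some (x i).inv)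
    (Nat.zero_le _) (fun _ h => absurd h (Nat.not_lt_zero _)) i hi
  rwa [List.getElem?_eq_getElem, Option.some_inj] at h

lemma getElem_cancelLen_ne {u : List (Letter d)} {x : ℕ → Letter d}
    (h : cancelLen u x < u.length) :
    u[u.length - 1 - cancelLen u x] ≠ (x (cancelLen u x)).inv := by
  intro heq
  have hk := cancelLen_le u x
  have hsucc : ∀ i < cancelLen u x + 1, u[u.length - 1 - i]? = some (x i).inv := fun i hi => by
    rcases Nat.lt_succ_iff_lt_or_eq.1 hi with hi | rfl
    · rw [List.getElem?_eq_getElem (by omega), getElem_of_lt_cancelLen hi]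
    · rw [List.getElem?_eq_getElem (by omega), heq]
  exact Nat.findGreatest_is_greatest (Nat.lt_succ_self _) h hsucc

lemma drop_cancelLen (u : List (Letter d)) (x : ℕ → Letter d) :
    u.drop (u.length - cancelLen u x) = invRev (seqPrefix x (cancelLen u x)) := by
  have hk := cancelLen_le u x
  refine List.ext_getElem ?_ fun i h₁ h₂ => ?_
  · simp only [List.length_drop, invRev_length, length_seqPrefix]
    omega
  simp only [List.length_drop] at h₁
  have hi := getElem_of_lt_cancelLen (u := u) (x := x) (i := cancelLen u x - 1 - i) (by omega)
  simp only [invRev, List.getElem_drop, List.getElem_reverse, List.getElem_map,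
    getElem_seqPrefix, List.length_map, length_seqPrefix]
  rw [← Letter.inv, ← hi]
  congr 1
  omega

lemma mk_mul_mk_seqPrefix_cancelLen (u : List (Letter d)) (x : ℕ → Letter d) :
    mk u * mk (seqPrefix x (cancelLen u x)) = mk (u.take (u.length - cancelLen u x)) := by
  have hu : mk u
      = mk (u.take (u.length - cancelLen u x)) * (mk (seqPrefix x (cancelLen u x)))⁻¹ := by
    rw [inv_mk, mul_mk, ← drop_cancelLen, List.take_append_drop]
  rw [hu, inv_mul_cancel_right]

lemma norm_mul_mk_seqPrefix_cancelLen_le (g : FreeGroup (Fin d)) (x : ℕ → Letter d) :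
    (g * mk (seqPrefix x (cancelLen (toWord g) x))).norm ≤ g.norm - cancelLen (toWord g) x := by
  rw [show g * _ = mk (toWord g) * _ by rw [mk_toWord], mk_mul_mk_seqPrefix_cancelLen]
  exact norm_mk_le.trans (by simp [FreeGroup.norm])

/-- `IsPlusLimit w x` says precisely that `toWord (w ^ n)` eventually agrees with `x` up to
any given length. -/
def AgreesUpTo (L : List (Letter d)) (x : ℕ → Letter d) (t : ℕ) : Prop :=
  t ≤ L.length ∧ ∀ i < t, L[i]? = some (x i)

lemma agreesUpTo_seqPrefix (x : ℕ → Letter d) (t : ℕ) : AgreesUpTo (seqPrefix x t) x t :=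
  ⟨by simp, fun i hi => by simp [seqPrefix, hi]⟩

namespace AgreesUpTo

variable {L u : List (Letter d)} {x y : ℕ → Letter d} {s t : ℕ}

lemma mono (h : AgreesUpTo L x t) (hst : s ≤ t) : AgreesUpTo L x s :=
  ⟨hst.trans h.1, fun i hi => h.2 i (hi.trans_le hst)⟩

lemma getElem (h : AgreesUpTo L x t) {i : ℕ} (hi : i < t) : L[i]'(by have := h.1; omega) = x i :=
  Option.some_inj.1 ((List.getElem?_eq_getElem _).symm.trans (h.2 i hi))

lemma apply_eq (h₁ : AgreesUpTo L x t) (h₂ : AgreesUpTo L y t) {i : ℕ} (hi : i < t) :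
    x i = y i :=
  (h₁.getElem hi).symm.trans (h₂.getElem hi)

lemma take_eq (h : AgreesUpTo L x t) : L.take t = seqPrefix x t :=
  List.ext_getElem (by simp [h.1]) fun i _ hi => by simpa using h.getElem (by simpa using hi)

lemma reduce_append (hu : FreeGroup.IsReduced u) (hL : FreeGroup.IsReduced L)
    (h : AgreesUpTo L x u.length) :
    reduce (u ++ L) = u.take (u.length - cancelLen u x) ++ L.drop (cancelLen u x) := by
  have hk := cancelLen_le u x
  have hjunction :
      FreeGroup.IsReduced (u.take (u.length - cancelLen u x) ++ L.drop (cancelLen u x)) := by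
    refine List.isChain_append.2 ⟨hu.infix (List.take_prefix _ _).isInfix,
      hL.infix (List.drop_suffix _ _).isInfix, fun a ha b hb => ?_⟩
    rw [List.getLast?_take] at ha
    split_ifs at ha with h0
    · simp at ha
    rw [List.getElem?_eq_getElem (by omega), Option.some_or, Option.mem_some_iff] at ha
    rw [List.head?_drop, h.2 _ (by omega), Option.mem_some_iff] at hb
    subst ha hb
    rw [Letter.reducedRel_iff_ne_inv]
    intro heq
    refine getElem_cancelLen_ne (u := u) (x := x) (by omega) ?_
    rw [heq, Letter.inv_inv]
    congr 1
    omega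
  have hmk : mk (u ++ L) = mk (u.take (u.length - cancelLen u x) ++ L.drop (cancelLen u x)) := by
    conv_lhs => rw [← List.take_append_drop (cancelLen u x) L, (h.mono hk).take_eq]
    rw [← mul_mk, ← mul_mk, ← mul_mk, ← mul_assoc, mk_mul_mk_seqPrefix_cancelLen]
  rw [reduce.sound hmk, hjunction.reduce_eq]

lemma norm_mul {g h : FreeGroup (Fin d)} (hagree : AgreesUpTo (toWord h) x g.norm) :
    (g * h).norm + 2 * cancelLen (toWord g) x = g.norm + h.norm := by
  have := cancelLen_le (toWord g) x
  have := hagree.1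
  simp only [FreeGroup.norm] at *
  rw [toWord_mul, hagree.reduce_append isReduced_toWord isReduced_toWord, List.length_append,
    List.length_take, List.length_drop]
  omega

lemma reduce_append_concatReduce (hu : FreeGroup.IsReduced u) (hL : FreeGroup.IsReduced L)
    (h : AgreesUpTo L x t) (ht : u.length ≤ t) :
    AgreesUpTo (reduce (u ++ L)) (concatReduce u x) (t - u.length) := by
  have hk := cancelLen_le u x
  have hlen := h.1
  rw [(h.mono ht).reduce_append hu hL]
  have hlength : (u.take (u.length - cancelLen u x) ++ L.drop (cancelLen u x)).length
      = (u.length - cancelLen u x) + (L.length - cancelLen u x) := by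
    simp only [List.length_append, List.length_take, List.length_drop]
    omega
  refine ⟨by omega, fun i hi => ?_⟩
  rw [List.getElem?_eq_getElem (by omega), Option.some_inj]
  by_cases hik : i < u.length - cancelLen u x
  · rw [List.getElem_append_left (by simpa using hik)]
    simp [concatReduce, hik]
  · rw [List.getElem_append_right (by simp only [List.length_take]; omega)]
    simp only [concatReduce, hik, dite_false, List.getElem_drop, List.length_take,
      min_eq_left (Nat.sub_le _ _)]
    exact h.getElem (by omega)

end AgreesUpTo

lemma isReducedSeq_of_forall_agreesUpTo {y : ℕ → Letter d}
    (h : ∀ t, ∃ L, FreeGroup.IsReduced L ∧ AgreesUpTo L y t) : IsReducedSeq y := by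
  intro n
  obtain ⟨L, hL, hagree⟩ := h (n + 2)
  rw [← hagree.getElem (Nat.lt_succ_self _), ← hagree.getElem (by omega : n < n + 2)]
  exact isReduced_iff_getElem.1 hL n _

lemma isReducedSeq_concatReduce {u : List (Letter d)} {x : ℕ → Letter d}
    (hu : FreeGroup.IsReduced u) (hx : IsReducedSeq x) : IsReducedSeq (concatReduce u x) :=
  isReducedSeq_of_forall_agreesUpTo fun t => ⟨_, isReduced_reduce _,
    (agreesUpTo_seqPrefix x (t + u.length)).reduce_append_concatReduce hu (isReduced_seqPrefix hx _)
      (by omega) |>.mono (by omega)⟩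

lemma boundaryAct_val (g : FreeGroup (Fin d)) (x : Boundary d) :
    (boundaryAct g x).1 = concatReduce (toWord g) x.1 := by
  rw [boundaryAct, dif_pos (isReducedSeq_concatReduce isReduced_toWord x.2)]

lemma boundaryAct_apply_of_lt {g : FreeGroup (Fin d)} {x : Boundary d} {i : ℕ}
    (hi : i < (toWord g).length - cancelLen (toWord g) x.1) :
    (boundaryAct g x).1 i = (toWord g)[i] := by
  simp [boundaryAct_val, concatReduce, hi]

lemma AgreesUpTo.boundaryAct {L : List (Letter d)} {x : Boundary d} {t : ℕ}
    (h : AgreesUpTo L x.1 t) (hL : FreeGroup.IsReduced L) (g : FreeGroup (Fin d))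
    (ht : (toWord g).length ≤ t) :
    AgreesUpTo (reduce (toWord g ++ L)) (boundaryAct g x).1 (t - (toWord g).length) := by
  rw [boundaryAct_val]
  exact h.reduce_append_concatReduce isReduced_toWord hL ht

lemma boundaryAct_one (x : Boundary d) : boundaryAct 1 x = x := by
  refine Subtype.ext (funext fun n => ?_)
  have h0 : cancelLen [] x.1 = 0 := Nat.le_zero.1 (cancelLen_le [] x.1)
  simp [boundaryAct_val, concatReduce, h0]

lemma boundaryAct_mul (g h : FreeGroup (Fin d)) (x : Boundary d) :
    boundaryAct (g * h) x = boundaryAct g (boundaryAct h x) := by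
  refine Subtype.ext (funext fun i => ?_)
  set t := i + 1 + (toWord g).length + (toWord h).length + (toWord (g * h)).length
  set L := seqPrefix x.1 t
  have hL := isReduced_seqPrefix x.2 t
  have hgh := (agreesUpTo_seqPrefix x.1 t).boundaryAct hL (g * h) (by omega)
  have hh := (agreesUpTo_seqPrefix x.1 t).boundaryAct hL h (by omega)
  have hg := hh.boundaryAct (isReduced_reduce _) g (by omega)
  have hsame : reduce (toWord (g * h) ++ L) = reduce (toWord g ++ reduce (toWord h ++ L)) :=
    reduce.sound (by simp only [← mul_mk, reduce.self, mk_toWord, mul_assoc])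
  rw [← hsame] at hg
  exact (hgh.mono (s := i + 1) (by omega)).apply_eq (hg.mono (by omega)) (Nat.lt_succ_self i)

lemma boundaryAct_zpow_of_eq {w : FreeGroup (Fin d)} {x : Boundary d}
    (h : boundaryAct w x = x) (j : ℤ) : boundaryAct (w ^ j) x = x := by
  have hinv : boundaryAct w⁻¹ x = x := by
    conv_lhs => rw [← h, ← boundaryAct_mul, inv_mul_cancel, boundaryAct_one]
  induction j using Int.induction_on with
  | zero => simpa using boundaryAct_one x
  | succ n ih => rw [zpow_add_one, boundaryAct_mul, h, ih]
  | pred n ih => rw [zpow_sub_one, boundaryAct_mul, hinv, ih]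

end Boundary

namespace IsPlusLimit

open Filter Boundary

variable {d : ℕ} {w : FreeGroup (Fin d)} {x y : Boundary d}

lemma eventually_agreesUpTo (h : IsPlusLimit w x) (t : ℕ) :
    ∀ᶠ n in atTop, AgreesUpTo (toWord (w ^ n)) x.1 t :=
  eventually_atTop.2 (h t)

lemma unique (hx : IsPlusLimit w x) (hy : IsPlusLimit w y) : x = y := by
  refine Subtype.ext (funext fun i => ?_)
  obtain ⟨n, hxn, hyn⟩ :=
    ((hx.eventually_agreesUpTo (i + 1)).and (hy.eventually_agreesUpTo (i + 1))).exists
  exact hxn.apply_eq hyn (Nat.lt_succ_self i)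

lemma boundaryAct_self (h : IsPlusLimit w x) : boundaryAct w x = x := by
  refine Subtype.ext (funext fun i => ?_)
  set t := i + 1 + (toWord w).length
  obtain ⟨n, hn, hsucc⟩ := ((h.eventually_agreesUpTo t).and
    ((tendsto_add_atTop_nat 1).eventually (h.eventually_agreesUpTo t))).exists
  have hact := hn.boundaryAct isReduced_toWord w (by omega)
  rw [← toWord_mul, ← pow_succ'] at hact
  exact (hact.mono (s := i + 1) (by omega)).apply_eq (hsucc.mono (by omega)) (Nat.lt_succ_self i)

lemma eventually_norm_pow_succ (h : IsPlusLimit w x) :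
    ∀ᶠ n in atTop,
      (w ^ (n + 1)).norm + 2 * cancelLen (toWord w) x.1 = w.norm + (w ^ n).norm := by
  filter_upwards [h.eventually_agreesUpTo w.norm] with n hn
  rw [pow_succ']
  exact hn.norm_mul

lemma eventually_norm_pow (h : IsPlusLimit w x) :
    ∀ᶠ n in atTop,
      (w ^ n).norm + 2 * cancelLen (toWord w⁻¹) x.1 = w.norm + (w ^ (n + 1)).norm := by
  filter_upwards [(tendsto_add_atTop_nat 1).eventually (h.eventually_agreesUpTo w.norm)]
    with n hn
  rw [← norm_inv_eq (x := w), ← (hn.mono (by rw [norm_inv_eq])).norm_mul, pow_succ',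
    inv_mul_cancel_left]

lemma cancelLen_add_cancelLen_inv (h : IsPlusLimit w x) :
    cancelLen (toWord w) x.1 + cancelLen (toWord w⁻¹) x.1 = w.norm := by
  obtain ⟨n, h₁, h₂⟩ := (h.eventually_norm_pow_succ.and h.eventually_norm_pow).exists
  omega

lemma two_mul_cancelLen_lt (h : IsPlusLimit w x) : 2 * cancelLen (toWord w) x.1 < w.norm := by
  by_contra! hle
  obtain ⟨N, hN⟩ := eventually_atTop.1 h.eventually_norm_pow_succ
  have hbdd : ∀ n ≥ N, (w ^ n).norm ≤ (w ^ N).norm :=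
    Nat.le_induction le_rfl fun n hn ih => by have := hN n hn; omega
  obtain ⟨n, hn, hlong⟩ :=
    ((eventually_ge_atTop N).and (h.eventually_agreesUpTo ((w ^ N).norm + 1))).exists
  have := hbdd n hn
  have : (w ^ N).norm + 1 ≤ (w ^ n).norm := hlong.1
  omega

lemma norm_lt_two_mul_cancelLen_inv (h : IsPlusLimit w x) :
    w.norm < 2 * cancelLen (toWord w⁻¹) x.1 := by
  have := h.cancelLen_add_cancelLen_inv
  have := h.two_mul_cancelLen_lt
  omega

lemma norm_mul_lt {g : FreeGroup (Fin d)} (h : IsPlusLimit w x)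
    (hg : w.norm ≤ cancelLen (toWord g) x.1) : (g * w).norm < g.norm := by
  -- `g * w = (g * p) * (p⁻¹ * w)`, where `p` spells the part of `x` that `g` cancels.
  set k := cancelLen (toWord g) x.1
  set p := mk (seqPrefix x.1 k)
  have hgp : (g * p).norm ≤ g.norm - k := norm_mul_mk_seqPrefix_cancelLen_le g x.1
  have hpw : (p⁻¹ * w).norm + 2 * cancelLen (toWord w⁻¹) x.1 = w.norm + k := by
    have hp : toWord p = seqPrefix x.1 k := by
      rw [toWord_mk, (isReduced_seqPrefix x.2 k).reduce_eq]
    have hagree : AgreesUpTo (toWord p) x.1 w⁻¹.norm := by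
      rw [hp, norm_inv_eq]
      exact (agreesUpTo_seqPrefix x.1 k).mono hg
    rw [← norm_inv_eq, mul_inv_rev, inv_inv, ← norm_inv_eq (x := w), hagree.norm_mul,
      norm_inv_eq]
    simp [FreeGroup.norm, hp]
  have := norm_mul_le (g * p) (p⁻¹ * w)
  rw [mul_assoc, mul_inv_cancel_left] at this
  have := h.norm_lt_two_mul_cancelLen_inv
  have := cancelLen_le (toWord g) x.1
  simp only [FreeGroup.norm] at *
  omega

lemma cancelLen_lt_of_norm_le (h : IsPlusLimit w x) {g : FreeGroup (Fin d)}
    (hg : g.norm ≤ (g * w).norm) : cancelLen (toWord g) x.1 < w.norm :=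
  lt_of_not_ge fun hle => (h.norm_mul_lt hle).not_ge hg

end IsPlusLimit

namespace Boundary

variable {d : ℕ}

lemma finite_setOf_norm_le (M : ℕ) : {g : FreeGroup (Fin d) | g.norm ≤ M}.Finite :=
  (List.finite_length_le _ M).preimage toWord_injective.injOn

lemma exists_norm_mul_zpow_le (g w : FreeGroup (Fin d)) :
    ∃ j : ℤ, ∀ i : ℤ, (g * w ^ j).norm ≤ (g * w ^ i).norm :=
  ⟨Function.argmin fun j : ℤ => (g * w ^ j).norm,
    fun i => Function.argmin_le (fun j : ℤ => (g * w ^ j).norm) i⟩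

def pairOrbit (x y : Boundary d) : Set (Boundary d × Boundary d) :=
  Set.range fun g => (boundaryAct g x, boundaryAct g y)

lemma pairOrbit_subset {w : FreeGroup (Fin d)} {xp xm : Boundary d} (hp : IsPlusLimit w xp)
    (hm : IsPlusLimit w⁻¹ xm) (k : ℕ) :
    pairOrbit xp xm ⊆
      (fun g => (boundaryAct g xp, boundaryAct g xm)) '' {g | g.norm ≤ k + w.norm} ∪
        {q | ∀ i < k, q.1.1 i = q.2.1 i} := by
  rintro _ ⟨g, rfl⟩
  obtain ⟨j, hj⟩ := exists_norm_mul_zpow_le g w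
  have hfixm : boundaryAct w xm = xm := by
    simpa using boundaryAct_zpow_of_eq hm.boundaryAct_self (-1)
  have hpair : (boundaryAct (g * w ^ j) xp, boundaryAct (g * w ^ j) xm)
      = (boundaryAct g xp, boundaryAct g xm) := by
    rw [boundaryAct_mul, boundaryAct_mul, boundaryAct_zpow_of_eq hp.boundaryAct_self,
      boundaryAct_zpow_of_eq hfixm]
  dsimp only
  rw [← hpair]
  by_cases hshort : (g * w ^ j).norm ≤ k + w.norm
  · exact Or.inl ⟨_, hshort, rfl⟩
  refine Or.inr fun i hi => ?_
  have hcp := hp.cancelLen_lt_of_norm_le (g := g * w ^ j) (by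
    simpa [mul_assoc, ← zpow_add_one] using hj (j + 1))
  have hcm := hm.cancelLen_lt_of_norm_le (g := g * w ^ j) (by
    simpa [mul_assoc, ← zpow_sub_one] using hj (j - 1))
  rw [norm_inv_eq] at hcm
  simp only [FreeGroup.norm] at *
  rw [boundaryAct_apply_of_lt (by omega), boundaryAct_apply_of_lt (by omega)]

lemma isClosed_setOf_isReducedSeq : IsClosed {x : ℕ → Letter d | IsReducedSeq x} := by
  simp only [IsReducedSeq, Set.ofPred_forall]
  exact isClosed_iInter fun n =>
    (isClosed_discrete {q : Letter d × Letter d | q.1 ≠ q.2.inv}).preimage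
      (f := fun x : ℕ → Letter d => (x (n + 1), x n)) (by fun_prop)

instance : CompactSpace (Boundary d) :=
  isCompact_iff_compactSpace.1 isClosed_setOf_isReducedSeq.isCompact

lemma isClosed_setOf_forall_lt_eq (k : ℕ) :
    IsClosed {q : Boundary d × Boundary d | ∀ i < k, q.1.1 i = q.2.1 i} := by
  have hcoord (i : ℕ) : Continuous fun x : Boundary d => x.1 i :=
    (continuous_apply i).comp continuous_subtype_val
  simp only [Set.ofPred_forall]
  exact isClosed_biInter fun i _ =>
    isClosed_eq ((hcoord i).comp continuous_fst) ((hcoord i).comp continuous_snd)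

lemma closure_pairOrbit_subset {w : FreeGroup (Fin d)} {xp xm : Boundary d}
    (hp : IsPlusLimit w xp) (hm : IsPlusLimit w⁻¹ xm) :
    closure (pairOrbit xp xm) ⊆ pairOrbit xp xm ∪ {q | q.1 = q.2} := by
  intro q hq
  by_cases hqO : q ∈ pairOrbit xp xm
  · exact Or.inl hqO
  refine Or.inr (Subtype.ext (funext fun i => ?_))
  have hclosed := (((finite_setOf_norm_le (i + 1 + w.norm)).image
    fun g => (boundaryAct g xp, boundaryAct g xm)).isClosed).union
      (isClosed_setOf_forall_lt_eq (i + 1))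
  rcases closure_minimal (pairOrbit_subset hp hm (i + 1)) hclosed hq with ⟨g, -, rfl⟩ | hagree
  · exact absurd ⟨g, rfl⟩ hqO
  · exact hagree i (Nat.lt_succ_self i)

open scoped Pointwise in
theorem isClosed_RW {W : Set (FreeGroup (Fin d))} (hW : W.Finite) : IsClosed (RW W) := by
  set S := {t : FreeGroup (Fin d) × Boundary d × Boundary d |
    (t.1 ∈ W ∨ t.1⁻¹ ∈ W) ∧ IsPlusLimit t.1 t.2.1 ∧ IsPlusLimit t.1⁻¹ t.2.2}
  have hS : S.Finite := by
    refine Set.Finite.of_finite_image (f := Prod.fst) ((hW.union hW.inv).subset ?_) ?_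
    · rintro _ ⟨t, ht, rfl⟩
      exact ht.1
    · rintro ⟨w, xp, xm⟩ ⟨-, hp, hm⟩ ⟨w', xp', xm'⟩ ⟨-, hp', hm'⟩ (rfl : w = w')
      exact Prod.ext rfl (Prod.ext (hp.unique hp') (hm.unique hm'))
  have hRW : RW W = {q | q.1 = q.2} ∪ ⋃ t ∈ S, closure (pairOrbit t.2.1 t.2.2) := by
    refine subset_antisymm (Set.union_subset_union_right _ ?_)
      (Set.union_subset Set.subset_union_left ?_)
    · rintro q ⟨g, w, xp, xm, hw, hp, hm, h₁, h₂⟩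
      exact Set.mem_biUnion (x := (w, xp, xm)) ⟨hw, hp, hm⟩
        (subset_closure ⟨g, Prod.ext h₁.symm h₂.symm⟩)
    · refine Set.iUnion₂_subset fun t ht => (closure_pairOrbit_subset ht.2.1 ht.2.2).trans ?_
      rintro q (⟨g, rfl⟩ | hq)
      · exact Or.inr ⟨g, t.1, t.2.1, t.2.2, ht.1, ht.2.1, ht.2.2, rfl, rfl⟩
      · exact Or.inl hq
  rw [hRW]
  exact isClosed_diagonal.union (hS.isClosed_biUnion fun _ _ => isClosed_closure)

end Boundary

theorem quotient_by_RW_closedMap_and_t2_general (d : ℕ)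
    (W : Set (FreeGroup (Fin d))) (hWfin : W.Finite)
    (hequiv : Equivalence fun x y : Boundary d => (x, y) ∈ RW W) :
    IsClosedMap
      (Quotient.mk (⟨fun x y => (x, y) ∈ RW W, hequiv⟩ : Setoid (Boundary d))) ∧
    T2Space
      (Quotient (⟨fun x y => (x, y) ∈ RW W, hequiv⟩ : Setoid (Boundary d))) := by
  have hclosed : IsClosedMap (Quotient.mk (⟨_, hequiv⟩ : Setoid (Boundary d))) :=
    isClosedMap_quotient_mk_of_isClosed (Boundary.isClosed_RW hWfin)
  exact ⟨hclosed, hclosed.t2Space_of_surjective continuous_quotient_mk' Quotient.mk_surjective⟩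

/-- For a finite subset `W ⊆ F_d \ {e}`, the quotient map
`π : ∂F_d → ∂F_d/R_W` is closed, and the quotient space `∂F_d/R_W` with the
quotient topology is Hausdorff. -/
theorem quotient_by_RW_closedMap_and_t2 (d : ℕ) (hd : 2 ≤ d)
    (W : Set (FreeGroup (Fin d))) (hWfin : W.Finite) (hW : ∀ w ∈ W, w ≠ 1)
    (hequiv : Equivalence fun x y : Boundary d => (x, y) ∈ RW W) :
    IsClosedMap
      (Quotient.mk (⟨fun x y => (x, y) ∈ RW W, hequiv⟩ : Setoid (Boundary d))) ∧
    T2Space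
      (Quotient (⟨fun x y => (x, y) ∈ RW W, hequiv⟩ : Setoid (Boundary d))) :=
  quotient_by_RW_closedMap_and_t2_general d W hWfin hequiv
end

section
/- Let w ∈ F_d \ {e} and let g ∈ F_d satisfy |g| ≤ |g·w^k| for all k ∈ ℤ, and suppose |g| > |w|. Then the first |g| − |w| letters of the infinite reduced word g·w^{+∞} and the first |g| − |w| letters of the infinite reduced word g·w^{-∞} both coincide with the first |g| − |w| letters of the reduced word of g. -/
/-!
Write `w = c v c⁻¹` with `v` cyclically reduced. All positive powers of `w` begin with `c v`,
hence so does `w^{+∞}`, and `c v` is more than half of `w`. If `g · w^{+∞}` cancelled at least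
`|c v|` letters of `g`, then `g` would end with `(c v)⁻¹` and `g w` would be shorter than `g`.
So fewer than `|w|` letters of `g` cancel, and the first `|g| - |w|` letters of `g` survive in
`g · w^{+∞}`; the same argument for `w⁻¹` handles `g · w^{-∞}`.
-/

open FreeGroup

namespace FreeGroup

variable {α : Type*} [DecidableEq α]

theorem length_toWord_mul_le_of_cancel {g w : FreeGroup α} {A P R : List (α × Bool)}
    (hg : g.toWord = A ++ invRev P) (hw : w.toWord = P ++ R) :
    (g * w).toWord.length ≤ A.length + R.length := by
  have hgw : g * w = mk (A ++ R) := by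
    rw [← mk_toWord (x := g), ← mk_toWord (x := w), hg, hw, ← mul_mk, ← mul_mk, ← mul_mk,
      ← inv_mk]
    group
  rw [hgw, ← List.length_append]
  exact norm_mk_le

theorem exists_isPrefix_toWord_pow_of_ne_one {w : FreeGroup α} (hw : w ≠ 1) :
    ∃ P R, w.toWord = P ++ R ∧ R.length < P.length ∧ ∀ n, P <+: (w ^ (n + 1)).toWord := by
  set c := reduceCyclically.conjugator w.toWord
  set v := reduceCyclically w.toWord
  have hdecomp : c ++ v ++ invRev c = w.toWord :=
    reduceCyclically.conj_conjugator_reduceCyclically _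
  have hv : v ≠ [] := by
    rintro hv
    apply hw
    rw [← mk_toWord (x := w), ← hdecomp, hv, List.append_nil, ← mul_mk, ← inv_mk,
      mul_inv_cancel]
  refine ⟨c ++ v, invRev c, hdecomp.symm, ?_,
    fun n => ⟨(List.replicate n v).flatten ++ invRev c, ?_⟩⟩
  · simpa using List.length_pos_iff.mpr hv
  · rw [toWord_pow, reduceCyclically.reduce_flatten_replicate_succ isReduced_toWord,
      List.replicate_succ]
    simp [c, v]

end FreeGroup

variable {d : ℕ}

@[simp] theorem Letter.inv_inv_s10 (a : Letter d) : a.inv.inv = a := by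
  simp [Letter.inv]

theorem FreeGroup.IsReduced.getElem_succ_ne_inv {L : List (Letter d)} (hL : IsReduced L) {n : ℕ}
    (hn : n + 1 < L.length) : L[n + 1] ≠ (L[n]).inv := by
  have hchain := List.isChain_iff_getElem.mp hL n hn
  intro h
  rw [h] at hchain
  simp [Letter.inv] at hchain

theorem eq_take_append_invRev {L P : List (Letter d)} (hP : P.length ≤ L.length)
    (h : ∀ i (hi : i < P.length), L[L.length - 1 - i]? = some (P[i]).inv) :
    L = L.take (L.length - P.length) ++ invRev P := by
  conv_lhs => rw [← List.take_append_drop (L.length - P.length) L]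
  congr 1
  refine List.ext_getElem (by simp; omega) fun n h₁ h₂ => ?_
  have hn := h (P.length - 1 - n) (by simp at h₂; omega)
  rw [show L.length - 1 - (P.length - 1 - n) = L.length - P.length + n by simp at h₁; omega,
    List.getElem?_eq_getElem (by simp at h₁; omega)] at hn
  simpa [invRev, List.getElem_reverse, Letter.inv] using hn

theorem cancelLen_le_length (u : List (Letter d)) (x : ℕ → Letter d) :
    cancelLen u x ≤ u.length :=
  Nat.findGreatest_le _

theorem getElem?_of_lt_cancelLen {u : List (Letter d)} {x : ℕ → Letter d} {i : ℕ}
    (hi : i < cancelLen u x) : u[u.length - 1 - i]? = some (x i).inv :=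
  Nat.findGreatest_spec (P := fun k => ∀ i < k, u[u.length - 1 - i]? = some (x i).inv)
    (Nat.zero_le _) (fun _ h => absurd h (Nat.not_lt_zero _)) i hi

theorem getElem?_cancelLen_ne {u : List (Letter d)} {x : ℕ → Letter d}
    (h : cancelLen u x < u.length) :
    u[u.length - 1 - cancelLen u x]? ≠ some (x (cancelLen u x)).inv := by
  intro heq
  refine Nat.findGreatest_is_greatest
    (P := fun k => ∀ i < k, u[u.length - 1 - i]? = some (x i).inv) (Nat.lt_succ_self _) h
    fun i hi => ?_
  rcases Nat.lt_succ_iff_lt_or_eq.mp hi with hi | rfl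
  · exact getElem?_of_lt_cancelLen hi
  · exact heq

theorem isReducedSeq_concatReduce {u : List (Letter d)} (hu : IsReduced u) {x : ℕ → Letter d}
    (hx : IsReducedSeq x) : IsReducedSeq (concatReduce u x) := by
  intro n
  have hk := cancelLen_le_length u x
  simp only [concatReduce]
  split_ifs with hn₁ hn
  · exact hu.getElem_succ_ne_inv (by omega)
  · omega
  · intro heq
    rw [show cancelLen u x + (n + 1 - (u.length - cancelLen u x)) = cancelLen u x by omega] at heq
    apply getElem?_cancelLen_ne (u := u) (x := x) (by omega)
    rw [heq, Letter.inv_inv_s10, show u.length - 1 - cancelLen u x = n by omega,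
      List.getElem?_eq_getElem]
  · rw [show cancelLen u x + (n + 1 - (u.length - cancelLen u x)) =
      cancelLen u x + (n - (u.length - cancelLen u x)) + 1 by omega]
    exact hx _

theorem boundaryAct_val (g : FreeGroup (Fin d)) (x : Boundary d) :
    (boundaryAct g x).1 = concatReduce g.toWord x.1 := by
  rw [boundaryAct, dif_pos (isReducedSeq_concatReduce isReduced_toWord x.2)]

theorem getElem?_toWord_eq_boundaryAct {g : FreeGroup (Fin d)} {x : Boundary d} {i : ℕ}
    (hi : i < g.toWord.length - cancelLen g.toWord x.1) :
    g.toWord[i]? = some ((boundaryAct g x).1 i) := by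
  rw [boundaryAct_val, concatReduce, dif_pos hi, List.getElem?_eq_getElem]

theorem IsPlusLimit.cancelLen_lt {w g : FreeGroup (Fin d)} {x : Boundary d}
    (hx : IsPlusLimit w x) (hw : w ≠ 1) (hgw : g.toWord.length ≤ (g * w).toWord.length) :
    cancelLen g.toWord x.1 < w.toWord.length := by
  obtain ⟨P, R, hwPR, hRP, hpow⟩ := exists_isPrefix_toWord_pow_of_ne_one hw
  have hPx : ∀ i (hi : i < P.length), P[i] = x.1 i := by
    intro i hi
    obtain ⟨N, hN⟩ := hx P.length
    obtain ⟨T, hT⟩ := hpow N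
    have := (hN (N + 1) (by omega)).2 i hi
    rw [← hT, List.getElem?_append_left hi, List.getElem?_eq_getElem hi] at this
    exact Option.some.inj this
  have hPw : P.length ≤ w.toWord.length := by simp [hwPR]
  by_contra hcancel
  have hPg : P.length ≤ g.toWord.length := by
    have := cancelLen_le_length g.toWord x.1
    omega
  have hg := eq_take_append_invRev hPg fun i hi => by
    rw [getElem?_of_lt_cancelLen (x := x.1) (by omega), hPx]
  have := length_toWord_mul_le_of_cancel hg hwPR
  simp only [List.length_take] at this
  omega

theorem prefix_of_translate_of_limits_general (d : ℕ)
    (w g : FreeGroup (Fin d)) (hw : w ≠ 1)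
    (hmin : ∀ k : ℤ,
      (FreeGroup.toWord g).length ≤ (FreeGroup.toWord (g * w ^ k)).length)
    (xp xm : Boundary d) (hxp : IsPlusLimit w xp) (hxm : IsPlusLimit w⁻¹ xm) :
    ∀ i < (FreeGroup.toWord g).length - (FreeGroup.toWord w).length,
      (FreeGroup.toWord g)[i]? = some ((boundaryAct g xp).1 i) ∧
      (FreeGroup.toWord g)[i]? = some ((boundaryAct g xm).1 i) := by
  intro i hi
  have hp := hxp.cancelLen_lt hw (by simpa using hmin 1)
  have hm := hxm.cancelLen_lt (inv_ne_one.mpr hw) (by simpa using hmin (-1))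
  rw [toWord_inv, invRev_length] at hm
  exact ⟨getElem?_toWord_eq_boundaryAct (by omega), getElem?_toWord_eq_boundaryAct (by omega)⟩

/-- Let `w ∈ F_d \ {e}` and let `g ∈ F_d` satisfy
`|g| ≤ |g wᵏ|` for all `k ∈ ℤ`, and suppose `|g| > |w|`.  Then the first
`|g| − |w|` letters of `g·w^{+∞}` and of `g·w^{-∞}` both coincide with the
first `|g| − |w|` letters of the reduced word of `g`. -/
theorem prefix_of_translate_of_limits (d : ℕ) (hd : 2 ≤ d)
    (w g : FreeGroup (Fin d)) (hw : w ≠ 1)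
    (hmin : ∀ k : ℤ,
      (FreeGroup.toWord g).length ≤ (FreeGroup.toWord (g * w ^ k)).length)
    (hlen : (FreeGroup.toWord w).length < (FreeGroup.toWord g).length)
    (xp xm : Boundary d) (hxp : IsPlusLimit w xp) (hxm : IsPlusLimit w⁻¹ xm) :
    ∀ i < (FreeGroup.toWord g).length - (FreeGroup.toWord w).length,
      (FreeGroup.toWord g)[i]? = some ((boundaryAct g xp).1 i) ∧
      (FreeGroup.toWord g)[i]? = some ((boundaryAct g xm).1 i) :=
  prefix_of_translate_of_limits_general d w g hw hmin xp xm hxp hxm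
end
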